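/- Let f(x; θ) = W_L σ_L(⋯ W_1 σ_1(W_0 x)) be a depth-L feed-forward network with a-Lipschitz activations σ_l (each fixing 0). For parameter tuples θ = (W_0,…,W_L) and γ = (V_0,…,V_L), |f(x;θ) − f(x;γ)| ≤ 2 a^L √(L+1) ‖x‖₂ · M^L · ‖θ − γ‖_F, whenever all weight matrices in θ and γ have spectral norm at most M. -/
import Mathlib


open Matrix

/-- Feed-forward network evaluation: `net Dm σ W L x = W_L σ_L(⋯ W_1 σ_1 (W_0 x))`,
where `W l : ℝ^{D_l} → ℝ^{D_{l+1}}` and `σ l : ℝ^{D_l} → ℝ^{D_l}`. -/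
noncomputable def net (Dm : ℕ → ℕ)
    (σ : (l : ℕ) → EuclideanSpace ℝ (Fin (Dm l)) → EuclideanSpace ℝ (Fin (Dm l)))
    (W : (l : ℕ) → Matrix (Fin (Dm (l + 1))) (Fin (Dm l)) ℝ) :
    (L : ℕ) → EuclideanSpace ℝ (Fin (Dm 0)) → EuclideanSpace ℝ (Fin (Dm (L + 1)))
  | 0, x => Matrix.toEuclideanLin (W 0) x
  | (L + 1), x => Matrix.toEuclideanLin (W (L + 1)) (σ (L + 1) (net Dm σ W L x))

/-- Frobenius-norm bound for the operator norm. -/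
lemma frob_bound {m n : ℕ} (A : Matrix (Fin m) (Fin n) ℝ) (v : EuclideanSpace ℝ (Fin n)) :
    ‖Matrix.toEuclideanLin A v‖ ≤ Real.sqrt (∑ i, ∑ j, (A i j) ^ 2) * ‖v‖ := by
  have hv : ‖v‖ = Real.sqrt (∑ j, (v j) ^ 2) := by
    rw [EuclideanSpace.norm_eq]
    congr 1
    exact Finset.sum_congr rfl fun j _ => by rw [Real.norm_eq_abs, sq_abs]
  have happ : ∀ i, (Matrix.toEuclideanLin A v) i = ∑ j, A i j * v j := by
    intro i
    rw [Matrix.toEuclideanLin_apply]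
    simp [Matrix.mulVec, dotProduct]
  have hn : ‖Matrix.toEuclideanLin A v‖
      = Real.sqrt (∑ i, (∑ j, A i j * v j) ^ 2) := by
    rw [EuclideanSpace.norm_eq]
    congr 1
    exact Finset.sum_congr rfl fun i _ => by rw [happ i, Real.norm_eq_abs, sq_abs]
  rw [hn, hv, ← Real.sqrt_mul (by positivity)]
  apply Real.sqrt_le_sqrt
  rw [Finset.sum_mul]
  apply Finset.sum_le_sum
  intro i _
  exact Finset.sum_mul_sq_le_sq_mul_sq _ _ _

/-- Lipschitz maps fixing 0 satisfy `‖σ u‖ ≤ a * ‖u‖`. -/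
lemma lip_norm_le {E : Type*} [SeminormedAddGroup E] {σ : E → E} {a : ℝ} (ha : 0 ≤ a)
    (hσ : LipschitzWith (Real.toNNReal a) σ) (hσ0 : σ 0 = 0) (u : E) : ‖σ u‖ ≤ a * ‖u‖ := by
  have := hσ.dist_le_mul u 0
  rw [hσ0, dist_zero_right, dist_zero_right, Real.coe_toNNReal a ha] at this
  exact this

lemma lip_dist_le {E : Type*} [SeminormedAddGroup E] {σ : E → E} {a : ℝ} (ha : 0 ≤ a)
    (hσ : LipschitzWith (Real.toNNReal a) σ) (u v : E) : dist (σ u) (σ v) ≤ a * dist u v := by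
  have := hσ.dist_le_mul u v
  rwa [Real.coe_toNNReal a ha] at this

/-- Growth bound for the network. -/
lemma net_norm_le (L : ℕ) (Dm : ℕ → ℕ)
    (σ : (l : ℕ) → EuclideanSpace ℝ (Fin (Dm l)) → EuclideanSpace ℝ (Fin (Dm l)))
    (W : (l : ℕ) → Matrix (Fin (Dm (l + 1))) (Fin (Dm l)) ℝ)
    (a M : ℝ) (ha : 0 ≤ a) (hM : 0 ≤ M)
    (hσ : ∀ l, LipschitzWith (Real.toNNReal a) (σ l))
    (hσ0 : ∀ l, σ l 0 = 0)
    (hW : ∀ l ≤ L, ∀ v, ‖Matrix.toEuclideanLin (W l) v‖ ≤ M * ‖v‖)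
    (x : EuclideanSpace ℝ (Fin (Dm 0))) :
    ‖net Dm σ W L x‖ ≤ a ^ L * M ^ (L + 1) * ‖x‖ := by
  induction L with
  | zero =>
    simpa [net] using hW 0 (le_refl 0) x
  | succ L ih =>
    have ih' := ih (fun l hl => hW l (hl.trans (Nat.le_succ L)))
    have h1 : ‖net Dm σ W (L + 1) x‖ ≤ M * ‖σ (L + 1) (net Dm σ W L x)‖ :=
      hW (L + 1) (le_refl _) _
    have h2 : ‖σ (L + 1) (net Dm σ W L x)‖ ≤ a * ‖net Dm σ W L x‖ :=
      lip_norm_le ha (hσ (L + 1)) (hσ0 (L + 1)) _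
    calc ‖net Dm σ W (L + 1) x‖ ≤ M * (a * ‖net Dm σ W L x‖) :=
          h1.trans (by exact mul_le_mul_of_nonneg_left h2 hM)
      _ ≤ M * (a * (a ^ L * M ^ (L + 1) * ‖x‖)) := by
          have := mul_le_mul_of_nonneg_left ih' ha
          exact mul_le_mul_of_nonneg_left this hM
      _ = a ^ (L + 1) * M ^ (L + 2) * ‖x‖ := by ring

/-- Difference bound for the network, with a sum over layers. -/
lemma net_diff_le (L : ℕ) (Dm : ℕ → ℕ)
    (σ : (l : ℕ) → EuclideanSpace ℝ (Fin (Dm l)) → EuclideanSpace ℝ (Fin (Dm l)))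
    (W V : (l : ℕ) → Matrix (Fin (Dm (l + 1))) (Fin (Dm l)) ℝ)
    (a M : ℝ) (ha : 0 ≤ a) (hM : 0 ≤ M)
    (hσ : ∀ l, LipschitzWith (Real.toNNReal a) (σ l))
    (hσ0 : ∀ l, σ l 0 = 0)
    (hW : ∀ l ≤ L, ∀ v, ‖Matrix.toEuclideanLin (W l) v‖ ≤ M * ‖v‖)
    (hV : ∀ l ≤ L, ∀ v, ‖Matrix.toEuclideanLin (V l) v‖ ≤ M * ‖v‖)
    (x : EuclideanSpace ℝ (Fin (Dm 0))) :
    ‖net Dm σ W L x - net Dm σ V L x‖ ≤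
      ∑ l ∈ Finset.range (L + 1),
        a ^ L * M ^ L * ‖x‖ * Real.sqrt (∑ i, ∑ j, (W l i j - V l i j) ^ 2) := by
  induction L with
  | zero =>
    have hsub : net Dm σ W 0 x - net Dm σ V 0 x
        = Matrix.toEuclideanLin (W 0 - V 0) x := by
      simp [net, map_sub]
    rw [hsub]
    have := frob_bound (W 0 - V 0) x
    simpa [Matrix.sub_apply, mul_comm] using this
  | succ L ih =>
    have ih' := ih (fun l hl => hW l (hl.trans (Nat.le_succ L)))
      (fun l hl => hV l (hl.trans (Nat.le_succ L)))
    set u := net Dm σ W L x with hu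
    set v := net Dm σ V L x with hvdef
    have hsplit : net Dm σ W (L + 1) x - net Dm σ V (L + 1) x
        = (Matrix.toEuclideanLin (W (L + 1)) (σ (L + 1) u)
            - Matrix.toEuclideanLin (W (L + 1)) (σ (L + 1) v))
          + Matrix.toEuclideanLin (W (L + 1) - V (L + 1)) (σ (L + 1) v) := by
      simp only [net, map_sub, LinearMap.sub_apply]
      abel
    set F : ℕ → ℝ := fun l => Real.sqrt (∑ i, ∑ j, (W l i j - V l i j) ^ 2) with hF
    have hFnn : ∀ l, 0 ≤ F l := fun l => Real.sqrt_nonneg _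
    have hterm1 : ‖Matrix.toEuclideanLin (W (L + 1)) (σ (L + 1) u)
        - Matrix.toEuclideanLin (W (L + 1)) (σ (L + 1) v)‖
        ≤ M * (a * ‖u - v‖) := by
      rw [← map_sub]
      refine (hW (L + 1) (le_refl _) _).trans ?_
      apply mul_le_mul_of_nonneg_left _ hM
      have := lip_dist_le ha (hσ (L + 1)) u v
      rwa [dist_eq_norm, dist_eq_norm] at this
    have hσv : ‖σ (L + 1) v‖ ≤ a * ‖v‖ := lip_norm_le ha (hσ (L + 1)) (hσ0 (L + 1)) _
    have hvnorm : ‖v‖ ≤ a ^ L * M ^ (L + 1) * ‖x‖ :=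
      net_norm_le L Dm σ V a M ha hM hσ hσ0 (fun l hl => hV l (hl.trans (Nat.le_succ L))) x
    have hterm2 : ‖Matrix.toEuclideanLin (W (L + 1) - V (L + 1)) (σ (L + 1) v)‖
        ≤ F (L + 1) * (a * (a ^ L * M ^ (L + 1) * ‖x‖)) := by
      refine (frob_bound _ _).trans ?_
      have h1 : Real.sqrt (∑ i, ∑ j, ((W (L + 1) - V (L + 1)) i j) ^ 2) = F (L + 1) := by
        simp [hF, Matrix.sub_apply]
      rw [h1]
      apply mul_le_mul_of_nonneg_left _ (hFnn _)
      exact hσv.trans (mul_le_mul_of_nonneg_left hvnorm ha)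
    have hbound : ‖net Dm σ W (L + 1) x - net Dm σ V (L + 1) x‖
        ≤ M * (a * ‖u - v‖) + F (L + 1) * (a * (a ^ L * M ^ (L + 1) * ‖x‖)) := by
      rw [hsplit]
      exact (norm_add_le _ _).trans (add_le_add hterm1 hterm2)
    refine hbound.trans ?_
    rw [Finset.sum_range_succ]
    have hMa : 0 ≤ M * a := mul_nonneg hM ha
    have h3 : M * (a * ‖u - v‖)
        ≤ ∑ l ∈ Finset.range (L + 1), a ^ (L + 1) * M ^ (L + 1) * ‖x‖ * F l := by
      calc M * (a * ‖u - v‖)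
          ≤ M * (a * ∑ l ∈ Finset.range (L + 1), a ^ L * M ^ L * ‖x‖ * F l) := by
            apply mul_le_mul_of_nonneg_left _ hM
            exact mul_le_mul_of_nonneg_left ih' ha
        _ = ∑ l ∈ Finset.range (L + 1), a ^ (L + 1) * M ^ (L + 1) * ‖x‖ * F l := by
            rw [Finset.mul_sum, Finset.mul_sum]
            exact Finset.sum_congr rfl fun l _ => by ring
    refine add_le_add h3 (le_of_eq ?_)
    ring
  
/-- Lipschitz property of neural networks in their parameters:
for a depth-L feed-forward network with a-Lipschitz activations fixing 0 and all
weight matrices of spectral norm at most M,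
|f(x;θ) − f(x;γ)| ≤ 2 a^L √(L+1) ‖x‖₂ M^L ‖θ − γ‖_F. -/
theorem stmt9 (L : ℕ) (Dm : ℕ → ℕ)
    (σ : (l : ℕ) → EuclideanSpace ℝ (Fin (Dm l)) → EuclideanSpace ℝ (Fin (Dm l)))
    (W V : (l : ℕ) → Matrix (Fin (Dm (l + 1))) (Fin (Dm l)) ℝ)
    (a M : ℝ) (ha : 0 ≤ a) (hM : 0 ≤ M)
    (hσ : ∀ l, LipschitzWith (Real.toNNReal a) (σ l))
    (hσ0 : ∀ l, σ l 0 = 0)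
    (hW : ∀ l ≤ L, ∀ v, ‖Matrix.toEuclideanLin (W l) v‖ ≤ M * ‖v‖)
    (hV : ∀ l ≤ L, ∀ v, ‖Matrix.toEuclideanLin (V l) v‖ ≤ M * ‖v‖)
    (x : EuclideanSpace ℝ (Fin (Dm 0))) :
    ‖net Dm σ W L x - net Dm σ V L x‖ ≤
      2 * a ^ L * Real.sqrt (L + 1) * ‖x‖ * M ^ L *
        Real.sqrt (∑ l ∈ Finset.range (L + 1), ∑ i, ∑ j, (W l i j - V l i j) ^ 2) := by
  set F : ℕ → ℝ := fun l => Real.sqrt (∑ i, ∑ j, (W l i j - V l i j) ^ 2) with hF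
  set S : ℕ → ℝ := fun l => ∑ i, ∑ j, (W l i j - V l i j) ^ 2 with hS
  have hSnn : ∀ l, 0 ≤ S l := fun l => by positivity
  have hFnn : ∀ l, 0 ≤ F l := fun l => Real.sqrt_nonneg _
  have h1 := net_diff_le L Dm σ W V a M ha hM hσ hσ0 hW hV x
  refine h1.trans ?_
  have hsumF : ∑ l ∈ Finset.range (L + 1), F l
      ≤ Real.sqrt (L + 1) * Real.sqrt (∑ l ∈ Finset.range (L + 1), S l) := by
    have hcs : (∑ l ∈ Finset.range (L + 1), F l) ^ 2
        ≤ (L + 1 : ℝ) * ∑ l ∈ Finset.range (L + 1), F l ^ 2 := by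
      have := sq_sum_le_card_mul_sum_sq (s := Finset.range (L + 1)) (f := F)
      simpa using this
    have hFsq : ∑ l ∈ Finset.range (L + 1), F l ^ 2 = ∑ l ∈ Finset.range (L + 1), S l :=
      Finset.sum_congr rfl fun l _ => Real.sq_sqrt (hSnn l)
    rw [hFsq] at hcs
    have h0 : 0 ≤ ∑ l ∈ Finset.range (L + 1), F l := Finset.sum_nonneg fun l _ => hFnn l
    calc ∑ l ∈ Finset.range (L + 1), F l
        = Real.sqrt ((∑ l ∈ Finset.range (L + 1), F l) ^ 2) := (Real.sqrt_sq h0).symm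
      _ ≤ Real.sqrt ((L + 1 : ℝ) * ∑ l ∈ Finset.range (L + 1), S l) := Real.sqrt_le_sqrt hcs
      _ = Real.sqrt (L + 1) * Real.sqrt (∑ l ∈ Finset.range (L + 1), S l) :=
          Real.sqrt_mul (by positivity) _
  have hc : (0 : ℝ) ≤ a ^ L * M ^ L * ‖x‖ := by positivity
  calc ∑ l ∈ Finset.range (L + 1), a ^ L * M ^ L * ‖x‖ * F l
      = a ^ L * M ^ L * ‖x‖ * ∑ l ∈ Finset.range (L + 1), F l := by
        rw [Finset.mul_sum]
    _ ≤ a ^ L * M ^ L * ‖x‖ *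
        (Real.sqrt (L + 1) * Real.sqrt (∑ l ∈ Finset.range (L + 1), S l)) :=
        mul_le_mul_of_nonneg_left hsumF hc
    _ ≤ 2 * a ^ L * Real.sqrt (L + 1) * ‖x‖ * M ^ L *
        Real.sqrt (∑ l ∈ Finset.range (L + 1), S l) := by
        nlinarith [Real.sqrt_nonneg ((L : ℝ) + 1),
          Real.sqrt_nonneg (∑ l ∈ Finset.range (L + 1), S l),
          mul_nonneg (mul_nonneg hc (Real.sqrt_nonneg ((L : ℝ) + 1)))
            (Real.sqrt_nonneg (∑ l ∈ Finset.range (L + 1), S l))]
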